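/- Let δ₁, δ₂, e₁, e₂ be real numbers with 0 < δ₁ < δ₂, 0 < e₁ < e₂, e₁ < δ₁, e₂ < δ₂, δ₁ + δ₂ ≤ π/2, and e₂/δ₂ < e₁/δ₁. Then sin(δ₂ + δ₁)/sin(δ₂ − δ₁) < sin(e₂ + e₁)/sin(e₂ − e₁). -/

import Mathlib

/-!
Set `S = δ₂ + δ₁`, `D = δ₂ - δ₁`, `s = e₂ + e₁`, `d = e₂ - e₁` and `c = s / S ∈ (0, 1)`.
Cross-multiplying the ratio hypothesis gives `S / D < s / d`, i.e. `d < c D`. Since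
`x ↦ sin (c x) / sin x` increases on `(0, π/2]`, we get
`sin S / sin D < sin (c S) / sin (c D) = sin s / sin (c D) < sin s / sin d`.
-/

open Real Set

theorem add_div_sub_lt_add_div_sub_of_div_lt_div {K : Type*} [Field K] [LinearOrder K]
    [IsStrictOrderedRing K] {a b c d : K} (hd : 0 < d) (hdb : d < b) (hca : c < a)
    (h : a / b < c / d) :
    (b + d) / (b - d) < (a + c) / (a - c) := by
  have hb : 0 < b := hd.trans hdb
  rw [div_lt_div_iff₀ hb hd] at h
  rw [div_lt_div_iff₀ (sub_pos.2 hdb) (sub_pos.2 hca)]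
  linarith

theorem mul_sin_lt_mul_sin {u v : ℝ} (hu : 0 < u) (huv : u < v) (hv : v ≤ π) :
    u * sin v < v * sin u := by
  have h0 : (0 : ℝ) ∈ Icc 0 π := ⟨le_rfl, pi_pos.le⟩
  have hslope := strictConcaveOn_sin_Icc.secant_strict_mono h0 ⟨hu.le, huv.le.trans hv⟩
    ⟨hu.le.trans huv.le, hv⟩ hu.ne' (hu.trans huv).ne' huv
  simp only [sin_zero, sub_zero] at hslope
  rw [div_lt_div_iff₀ (hu.trans huv) hu] at hslope
  linarith

/-- The numerator of the derivative of `x ↦ sin (c x) / sin x` is positive. -/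
theorem sin_mul_mul_cos_lt {c x : ℝ} (hc0 : 0 < c) (hc1 : c < 1) (hx : 0 < x)
    (hcx : (1 + c) * x ≤ π) :
    sin (c * x) * cos x < c * cos (c * x) * sin x := by
  have key := mul_sin_lt_mul_sin (mul_pos (sub_pos.2 hc1) hx)
    (by nlinarith : (1 - c) * x < (1 + c) * x) hcx
  rw [show (1 + c) * x = x + c * x by ring, show (1 - c) * x = x - c * x by ring,
    sin_add, sin_sub] at key
  nlinarith

theorem strictMonoOn_sin_mul_div_sin {c : ℝ} (hc0 : 0 < c) (hc1 : c < 1) :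
    StrictMonoOn (fun x => sin (c * x) / sin x) (Ioc 0 (π / 2)) := by
  have hsin_pos : ∀ x ∈ Ioc 0 (π / 2), 0 < sin x := fun x hx =>
    sin_pos_of_pos_of_lt_pi hx.1 (hx.2.trans_lt (by linarith [pi_pos]))
  apply strictMonoOn_of_deriv_pos (convex_Ioc 0 (π / 2))
  · exact ((continuous_sin.comp (continuous_const_mul c)).continuousOn.div
      continuous_sin.continuousOn) fun x hx => (hsin_pos x hx).ne'
  · intro x hx
    rw [interior_Ioc] at hx
    have hsx := hsin_pos x (Ioo_subset_Ioc_self hx)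
    have hderiv : HasDerivAt (fun x => sin (c * x) / sin x)
        ((cos (c * x) * c * sin x - sin (c * x) * cos x) / sin x ^ 2) x := by
      have hnum := ((hasDerivAt_id x).const_mul c).sin
      simp only [id, mul_one] at hnum
      exact hnum.div (hasDerivAt_sin x) hsx.ne'
    rw [hderiv.deriv]
    have hnum := sin_mul_mul_cos_lt hc0 hc1 hx.1
      (by nlinarith [mul_pos (sub_pos.2 hc1) hx.1, hx.2])
    exact div_pos (by linarith) (pow_pos hsx 2)

theorem sin_div_sin_lt_sin_mul_div_sin_mul {c x y : ℝ} (hc0 : 0 < c) (hc1 : c < 1)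
    (hx : 0 < x) (hxy : x < y) (hy : y ≤ π / 2) :
    sin y / sin x < sin (c * y) / sin (c * x) := by
  have hsin_pos : ∀ t, 0 < t → t ≤ π / 2 → 0 < sin t := fun t ht ht' =>
    sin_pos_of_pos_of_lt_pi ht (ht'.trans_lt (by linarith [pi_pos]))
  have hmono := strictMonoOn_sin_mul_div_sin hc0 hc1 ⟨hx, by linarith⟩ ⟨hx.trans hxy, hy⟩ hxy
  have hcx : 0 < c * x := mul_pos hc0 hx
  rw [div_lt_div_iff₀ (hsin_pos x hx (by linarith)) (hsin_pos y (by linarith) hy)] at hmono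
  rw [div_lt_div_iff₀ (hsin_pos x hx (by linarith)) (hsin_pos _ hcx (by nlinarith))]
  linarith

theorem burning_sphere_reductio (δ₁ δ₂ e₁ e₂ : ℝ)
    (hδ₁ : 0 < δ₁) (hδ : δ₁ < δ₂) (he₁ : 0 < e₁) (he : e₁ < e₂)
    (he₁δ₁ : e₁ < δ₁) (he₂δ₂ : e₂ < δ₂) (hsum : δ₁ + δ₂ ≤ π / 2)
    (hratio : e₂ / δ₂ < e₁ / δ₁) :
    Real.sin (δ₂ + δ₁) / Real.sin (δ₂ - δ₁) < Real.sin (e₂ + e₁) / Real.sin (e₂ - e₁) := by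
  have hS : 0 < δ₂ + δ₁ := by linarith
  have hD : 0 < δ₂ - δ₁ := by linarith
  set c := (e₂ + e₁) / (δ₂ + δ₁)
  have hc0 : 0 < c := div_pos (by linarith) hS
  have hc1 : c < 1 := (div_lt_one hS).2 (by linarith)
  have hcS : c * (δ₂ + δ₁) = e₂ + e₁ := div_mul_cancel₀ _ hS.ne'
  have hcD : e₂ - e₁ < c * (δ₂ - δ₁) := by
    have hcross := add_div_sub_lt_add_div_sub_of_div_lt_div hδ₁ hδ he hratio
    rw [div_lt_div_iff₀ hD (by linarith)] at hcross
    rw [div_mul_eq_mul_div, lt_div_iff₀ hS]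
    linarith
  have hcD_le : c * (δ₂ - δ₁) ≤ π / 2 := by nlinarith
  calc sin (δ₂ + δ₁) / sin (δ₂ - δ₁)
      < sin (c * (δ₂ + δ₁)) / sin (c * (δ₂ - δ₁)) :=
        sin_div_sin_lt_sin_mul_div_sin_mul hc0 hc1 hD (by linarith) (by linarith)
    _ = sin (e₂ + e₁) / sin (c * (δ₂ - δ₁)) := by rw [hcS]
    _ < sin (e₂ + e₁) / sin (e₂ - e₁) :=
        div_lt_div_of_pos_left (sin_pos_of_pos_of_lt_pi (by linarith) (by linarith [pi_pos]))
          (sin_pos_of_pos_of_lt_pi (by linarith) (by linarith [pi_pos]))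
          (sin_lt_sin_of_lt_of_le_pi_div_two (by linarith) hcD_le hcD)
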